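/- arXiv:2401.04951 — 2 statements merged into one kernel-verified Lean document; each statement's English description precedes it below -/
import Mathlib

section
/- Let T ∈ G be hyperbolic and let S ∈ G satisfy S ∘ T = T ∘ S. Then S is either hyperbolic, or S is boundary elliptic; in particular S is neither parabolic nor regular elliptic. -/
/-! The two boundary fixed points `x ≠ y` of the hyperbolic `T` carry distinct eigenvalues
`μ ≠ ν`, since equal ones would make the midpoint of `x` and `y` an elliptic fixed point.
A commuting `S` maps the `μ`-eigenspace of `T` into itself and preserves the light cone, so
`S (x, 1)` is a light-like `μ`-eigenvector of `T`, hence a multiple of `(x, 1)`; likewise for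
`y`. If the two eigenvalues `α, β` of `S` agree, `(x, 1) + (y, 1)` is a time-like vector in
a two-dimensional eigenspace. Otherwise a third fixed point `z` of `S` with eigenvalue `γ`
would give `γ * conj α = 1 = γ * conj β`, because `A ((z, 1), (x, 1)) = ⟨z, x⟩ - 1 ≠ 0` on
the closed ball; so `S` is hyperbolic. -/

noncomputable section

variable {H : Type*} [NormedAddCommGroup H] [InnerProductSpace ℂ H] [CompleteSpace H]

/-- The Hermitian form `A((x,z),(y,w)) = ⟨x,y⟩ - z·conj w` on `H ⊕ ℂ`, linear in the
first argument (the paper's convention); `⟨x,y⟩` (linear in `x`) is `inner y x` in Mathlib. -/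
def formA (u v : H × ℂ) : ℂ :=
  (inner ℂ v.1 u.1 : ℂ) - u.2 * (starRingEnd ℂ) v.2

/-- The standard inner product of the Hilbert space `H ⊕ ℂ`, linear in the first argument. -/
def ipStd (u v : H × ℂ) : ℂ :=
  (inner ℂ v.1 u.1 : ℂ) + u.2 * (starRingEnd ℂ) v.2

/-- Membership in the group `G` of bounded bijective linear maps preserving `A`. -/
def memG (T : (H × ℂ) →L[ℂ] (H × ℂ)) : Prop :=
  Function.Bijective T ∧ ∀ u v : H × ℂ, formA (T u) (T v) = formA u v

/-- `T` is elliptic: it has an eigenvector `(x,1)` with `‖x‖ < 1`. -/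
def IsEllipticG (T : (H × ℂ) →L[ℂ] (H × ℂ)) : Prop :=
  ∃ x : H, ‖x‖ < 1 ∧ ∃ μ : ℂ, T (x, 1) = μ • ((x, 1) : H × ℂ)

/-- Points `x` of the closed unit ball with `(x,1)` an eigenvector of `T`. -/
def fixedBall (T : (H × ℂ) →L[ℂ] (H × ℂ)) : Set H :=
  {x : H | ‖x‖ ≤ 1 ∧ ∃ μ : ℂ, T (x, 1) = μ • ((x, 1) : H × ℂ)}

/-- `T` is hyperbolic: not elliptic, with exactly two fixed points in the closed ball. -/
def IsHyperbolicG (T : (H × ℂ) →L[ℂ] (H × ℂ)) : Prop :=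
  ¬ IsEllipticG T ∧ ∃ x y : H, x ≠ y ∧ fixedBall T = {x, y}

/-- `T` is parabolic: not elliptic, with exactly one fixed point in the closed ball. -/
def IsParabolicG (T : (H × ℂ) →L[ℂ] (H × ℂ)) : Prop :=
  ¬ IsEllipticG T ∧ ∃ x : H, fixedBall T = {x}

/-- `M†`, the `A`-orthogonal complement of a subspace `M` of `H ⊕ ℂ`. -/
def daggerA (M : Submodule ℂ (H × ℂ)) : Submodule ℂ (H × ℂ) where
  carrier := {v | ∀ m ∈ M, formA v m = 0}
  add_mem' := by
    intro a b ha hb m hm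
    have h1 := ha m hm
    have h2 := hb m hm
    simp only [formA, Prod.fst_add, Prod.snd_add, inner_add_right, add_mul] at *
    linear_combination h1 + h2
  zero_mem' := by
    intro m hm
    simp [formA]
  smul_mem' := by
    intro c a ha m hm
    have h1 := ha m hm
    simp only [formA, Prod.smul_fst, Prod.smul_snd, inner_smul_right, smul_eq_mul] at *
    linear_combination c * h1

/-- The norm induced by `A` on a subspace where `A` is positive. -/
def nA (v : H × ℂ) : ℝ := Real.sqrt (formA v v).re

/-- Sequential completeness of a subspace for the norm induced by `A`. -/
def CompleteForA (M : Submodule ℂ (H × ℂ)) : Prop :=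
  ∀ f : ℕ → H × ℂ, (∀ n, f n ∈ M) →
    (∀ ε : ℝ, 0 < ε → ∃ N : ℕ, ∀ m n : ℕ, N ≤ m → N ≤ n → nA (f m - f n) < ε) →
    ∃ v ∈ M, ∀ ε : ℝ, 0 < ε → ∃ N : ℕ, ∀ n : ℕ, N ≤ n → nA (f n - v) < ε

end

section
variable {H : Type*} [NormedAddCommGroup H] [InnerProductSpace ℂ H] [CompleteSpace H]

/-- An elliptic element is boundary elliptic if some time-like eigenvalue has
geometric multiplicity at least two. -/
def IsBoundaryEllipticG (S : (H × ℂ) →L[ℂ] (H × ℂ)) : Prop :=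
  IsEllipticG S ∧ ∃ lam : ℂ,
    (∃ v : H × ℂ, S v = lam • v ∧ ∃ c : ℝ, c < 0 ∧ formA v v = (c : ℂ)) ∧
    (∃ v w : H × ℂ, S v = lam • v ∧ S w = lam • w ∧ LinearIndependent ℂ ![v, w])

/-- An elliptic element is regular elliptic if it is not boundary elliptic. -/
def IsRegularEllipticG (S : (H × ℂ) →L[ℂ] (H × ℂ)) : Prop :=
  IsEllipticG S ∧ ¬ IsBoundaryEllipticG S

end

section

variable {H : Type*} [NormedAddCommGroup H] [InnerProductSpace ℂ H]

open ComplexConjugate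

lemma formA_smul_left (a : ℂ) (u v : H × ℂ) : formA (a • u) v = a * formA u v := by
  simp only [formA, Prod.smul_fst, Prod.smul_snd, inner_smul_right, smul_eq_mul]
  ring

lemma formA_smul_right (b : ℂ) (u v : H × ℂ) : formA u (b • v) = conj b * formA u v := by
  simp only [formA, Prod.smul_fst, Prod.smul_snd, inner_smul_left, smul_eq_mul, map_mul]
  ring

lemma formA_self (u : H × ℂ) : formA u u = ((‖u.1‖ ^ 2 - ‖u.2‖ ^ 2 : ℝ) : ℂ) := by
  simp [formA, inner_self_eq_norm_sq_to_K, Complex.mul_conj']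

lemma formA_mk_one_mk_one (a b : H) : formA (a, (1 : ℂ)) (b, 1) = inner ℂ b a - 1 := by
  simp [formA]

lemma eq_of_inner_eq_one {a b : H} (ha : ‖a‖ ≤ 1) (hb : ‖b‖ ≤ 1) (h : inner ℂ b a = 1) :
    a = b := by
  have hsq : ‖b - a‖ ^ 2 = ‖b‖ ^ 2 - 2 + ‖a‖ ^ 2 := by simpa [h] using norm_sub_sq (𝕜 := ℂ) b a
  have : ‖b - a‖ ^ 2 ≤ 0 := by nlinarith [norm_nonneg a, norm_nonneg b]
  exact (sub_eq_zero.mp (norm_eq_zero.mp (by nlinarith [norm_nonneg (b - a)]))).symm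

lemma formA_mk_one_ne_zero {a b : H} (ha : ‖a‖ ≤ 1) (hb : ‖b‖ ≤ 1) (hab : a ≠ b) :
    formA (a, (1 : ℂ)) (b, 1) ≠ 0 := by
  rw [formA_mk_one_mk_one, sub_ne_zero]
  exact fun h => hab (eq_of_inner_eq_one ha hb h)

lemma norm_add_lt_two {x y : H} (hx : ‖x‖ = 1) (hy : ‖y‖ = 1) (hxy : x ≠ y) : ‖x + y‖ < 2 := by
  have hpar := parallelogram_law_with_norm ℂ x y
  have hpos : 0 < ‖x - y‖ := norm_pos_iff.mpr (sub_ne_zero.mpr hxy)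
  rw [hx, hy] at hpar
  nlinarith [norm_nonneg (x + y)]

lemma smul_mk_one_injective {z : H} {μ ν : ℂ}
    (h : μ • ((z, 1) : H × ℂ) = ν • ((z, 1) : H × ℂ)) : μ = ν := by
  simpa using congrArg Prod.snd h

lemma exists_smul_mk_one_of_formA_self_eq_zero {u : H × ℂ} (hu : u ≠ 0) (hq : formA u u = 0) :
    ∃ c : ℂ, c ≠ 0 ∧ ∃ z : H, ‖z‖ = 1 ∧ u = c • ((z, 1) : H × ℂ) := by
  have hnorm : ‖u.1‖ = ‖u.2‖ := by
    rw [formA_self, Complex.ofReal_eq_zero, sub_eq_zero] at hq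
    exact (pow_left_inj₀ (norm_nonneg _) (norm_nonneg _) two_ne_zero).mp hq
  have hc : u.2 ≠ 0 := fun h0 =>
    hu (Prod.ext (norm_eq_zero.mp (by rw [hnorm, h0, norm_zero])) h0)
  refine ⟨u.2, hc, u.2⁻¹ • u.1, ?_, ?_⟩
  · rw [norm_smul, norm_inv, hnorm, inv_mul_cancel₀ (norm_ne_zero_iff.mpr hc)]
  · ext <;> simp [smul_smul, mul_inv_cancel₀ hc]

lemma mul_conj_eq_one_of_formA_ne_zero {S : (H × ℂ) →L[ℂ] (H × ℂ)}
    (hS : ∀ u v : H × ℂ, formA (S u) (S v) = formA u v) {u v : H × ℂ} {γ δ : ℂ}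
    (hu : S u = γ • u) (hv : S v = δ • v) (hne : formA u v ≠ 0) :
    γ * conj δ = 1 := by
  have h := hS u v
  rw [hu, hv, formA_smul_left, formA_smul_right, ← mul_assoc] at h
  exact mul_right_cancel₀ hne (h.trans (one_mul _).symm)

lemma norm_eq_one_of_mem_fixedBall {T : (H × ℂ) →L[ℂ] (H × ℂ)} (hT : ¬ IsEllipticG T)
    {x : H} (hx : x ∈ fixedBall T) : ‖x‖ = 1 :=
  hx.1.eq_or_lt.resolve_right fun hlt => hT ⟨x, hlt, hx.2⟩

lemma isEllipticG_of_eigen_mk_one {S : (H × ℂ) →L[ℂ] (H × ℂ)} {x y : H} {κ : ℂ}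
    (hx : ‖x‖ = 1) (hy : ‖y‖ = 1) (hxy : x ≠ y)
    (hSx : S (x, 1) = κ • ((x, 1) : H × ℂ)) (hSy : S (y, 1) = κ • ((y, 1) : H × ℂ)) :
    IsEllipticG S := by
  refine ⟨(2 : ℂ)⁻¹ • (x + y), ?_, κ, ?_⟩
  · rw [norm_smul, norm_inv, Complex.norm_two]
    linarith [norm_add_lt_two hx hy hxy]
  · have hmid : (((2 : ℂ)⁻¹ • (x + y), (1 : ℂ)) : H × ℂ) =
        (2 : ℂ)⁻¹ • (((x, 1) : H × ℂ) + (y, 1)) := by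
      ext <;> norm_num
    rw [hmid, map_smul, map_add, hSx, hSy, ← smul_add, smul_comm]

lemma linearIndependent_mk_one {x y : H} (hxy : x ≠ y) :
    LinearIndependent ℂ ![((x, 1) : H × ℂ), (y, 1)] := by
  rw [LinearIndependent.pair_iff]
  intro s t hst
  have ht : t = -s := by simpa [eq_neg_iff_add_eq_zero, add_comm] using congrArg Prod.snd hst
  have hfst : s • (x - y) = 0 := by
    simpa [ht, smul_sub, sub_eq_add_neg] using congrArg Prod.fst hst
  rcases smul_eq_zero.mp hfst with hs | hxy'
  · exact ⟨hs, by rw [ht, hs, neg_zero]⟩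
  · exact absurd (sub_eq_zero.mp hxy') hxy

lemma isBoundaryEllipticG_of_eigen_mk_one {S : (H × ℂ) →L[ℂ] (H × ℂ)} {x y : H} {κ : ℂ}
    (hx : ‖x‖ = 1) (hy : ‖y‖ = 1) (hxy : x ≠ y)
    (hSx : S (x, 1) = κ • ((x, 1) : H × ℂ)) (hSy : S (y, 1) = κ • ((y, 1) : H × ℂ)) :
    IsBoundaryEllipticG S := by
  refine ⟨isEllipticG_of_eigen_mk_one hx hy hxy hSx hSy, κ,
    ⟨(x, 1) + (y, 1), by rw [map_add, hSx, hSy, smul_add], _, ?_, formA_self _⟩,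
    ⟨_, _, hSx, hSy, linearIndependent_mk_one hxy⟩⟩
  have h2 : ‖((1 : ℂ) + 1)‖ = 2 := by norm_num
  simp only [Prod.fst_add, Prod.snd_add, h2]
  nlinarith [norm_add_lt_two hx hy hxy, norm_nonneg (x + y)]

lemma eq_or_eq_of_mem_fixedBall {S : (H × ℂ) →L[ℂ] (H × ℂ)}
    (hS : ∀ u v : H × ℂ, formA (S u) (S v) = formA u v) {x y z : H} {α β : ℂ}
    (hx : ‖x‖ = 1) (hy : ‖y‖ = 1)
    (hSx : S (x, 1) = α • ((x, 1) : H × ℂ)) (hSy : S (y, 1) = β • ((y, 1) : H × ℂ))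
    (hαβ : α ≠ β) (hz : z ∈ fixedBall S) : z = x ∨ z = y := by
  obtain ⟨hz1, γ, hγ⟩ := hz
  by_contra! hne
  have hα := mul_conj_eq_one_of_formA_ne_zero hS hγ hSx (formA_mk_one_ne_zero hz1 hx.le hne.1)
  have hβ := mul_conj_eq_one_of_formA_ne_zero hS hγ hSy (formA_mk_one_ne_zero hz1 hy.le hne.2)
  have hγ0 : γ ≠ 0 := by rintro rfl; simp at hα
  exact hαβ (star_injective (mul_left_cancel₀ hγ0 (hα.trans hβ.symm)))

lemma isHyperbolicG_of_eigen_mk_one {S : (H × ℂ) →L[ℂ] (H × ℂ)}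
    (hS : ∀ u v : H × ℂ, formA (S u) (S v) = formA u v) {x y : H} {α β : ℂ}
    (hx : ‖x‖ = 1) (hy : ‖y‖ = 1) (hxy : x ≠ y)
    (hSx : S (x, 1) = α • ((x, 1) : H × ℂ)) (hSy : S (y, 1) = β • ((y, 1) : H × ℂ))
    (hαβ : α ≠ β) : IsHyperbolicG S := by
  have hfix := fun z => eq_or_eq_of_mem_fixedBall (z := z) hS hx hy hSx hSy hαβ
  refine ⟨?_, x, y, hxy, ?_⟩
  · rintro ⟨w, hw, hSw⟩
    rcases hfix w ⟨hw.le, hSw⟩ with rfl | rfl <;> linarith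
  · ext z
    refine ⟨hfix z, ?_⟩
    rintro (rfl | rfl)
    exacts [⟨hx.le, α, hSx⟩, ⟨hy.le, β, hSy⟩]

lemma not_isParabolicG_of_mem_fixedBall {S : (H × ℂ) →L[ℂ] (H × ℂ)} {x y : H}
    (hx : x ∈ fixedBall S) (hy : y ∈ fixedBall S) (hxy : x ≠ y) : ¬ IsParabolicG S := by
  rintro ⟨-, z, hz⟩
  rw [hz] at hx hy
  exact hxy (hx.trans hy.symm)

lemma eq_of_mem_fixedBall_pair {T : (H × ℂ) →L[ℂ] (H × ℂ)} {x y z : H} {μ ν : ℂ}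
    (hball : fixedBall T = {x, y}) (hy : T (y, 1) = ν • ((y, 1) : H × ℂ)) (hμν : μ ≠ ν)
    (hz : ‖z‖ ≤ 1) (hTz : T (z, 1) = μ • ((z, 1) : H × ℂ)) : z = x := by
  have hmem : z ∈ fixedBall T := ⟨hz, μ, hTz⟩
  rw [hball] at hmem
  rcases hmem with rfl | rfl
  · rfl
  · exact absurd (smul_mk_one_injective (hTz.symm.trans hy)) hμν

lemma exists_eigen_of_commute {T S : (H × ℂ) →L[ℂ] (H × ℂ)} (hS : memG S)
    (hcomm : S ∘L T = T ∘L S) {x : H} {μ : ℂ} (hx : ‖x‖ = 1)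
    (hTx : T (x, 1) = μ • ((x, 1) : H × ℂ))
    (huniq : ∀ z : H, ‖z‖ = 1 → T (z, 1) = μ • ((z, 1) : H × ℂ) → z = x) :
    ∃ α : ℂ, S (x, 1) = α • ((x, 1) : H × ℂ) := by
  have hTS : T (S (x, 1)) = μ • S (x, 1) := by
    rw [← ContinuousLinearMap.comp_apply, ← hcomm, ContinuousLinearMap.comp_apply, hTx, map_smul]
  have hne : S (x, 1) ≠ 0 := fun h0 =>
    one_ne_zero (congrArg Prod.snd (hS.1.1 (h0.trans (map_zero S).symm)))
  have hq : formA (S (x, 1)) (S (x, 1)) = 0 := by simp [hS.2, formA_self, hx]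
  obtain ⟨c, hc, z, hz, hSx⟩ := exists_smul_mk_one_of_formA_self_eq_zero hne hq
  have hTz : T (z, 1) = μ • ((z, 1) : H × ℂ) := by
    rw [hSx, map_smul, smul_comm] at hTS
    exact smul_right_injective _ hc hTS
  exact ⟨c, by rw [hSx, huniq z hz hTz]⟩

end

section
variable {H : Type*} [NormedAddCommGroup H] [InnerProductSpace ℂ H] [CompleteSpace H]

theorem commutes_with_hyperbolic_general (T S : (H × ℂ) →L[ℂ] (H × ℂ))
    (hhyp : IsHyperbolicG T)
    (hS : memG S) (hcomm : S ∘L T = T ∘L S) :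
    (IsHyperbolicG S ∨ IsBoundaryEllipticG S) ∧
    ¬ IsParabolicG S ∧ ¬ IsRegularEllipticG S := by
  obtain ⟨hTell, x, y, hxy, hball⟩ := hhyp
  obtain ⟨hx, μ, hμ⟩ : x ∈ fixedBall T := hball ▸ Set.mem_insert x {y}
  obtain ⟨hy, ν, hν⟩ : y ∈ fixedBall T := hball ▸ Set.mem_insert_of_mem x rfl
  have hx1 := norm_eq_one_of_mem_fixedBall hTell ⟨hx, μ, hμ⟩
  have hy1 := norm_eq_one_of_mem_fixedBall hTell ⟨hy, ν, hν⟩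
  have hμν : μ ≠ ν := fun h => hTell (isEllipticG_of_eigen_mk_one hx1 hy1 hxy hμ (h ▸ hν))
  obtain ⟨α, hα⟩ := exists_eigen_of_commute hS hcomm hx1 hμ
    fun z hz => eq_of_mem_fixedBall_pair hball hν hμν hz.le
  obtain ⟨β, hβ⟩ := exists_eigen_of_commute hS hcomm hy1 hν
    fun z hz => eq_of_mem_fixedBall_pair (Set.pair_comm x y ▸ hball) hμ hμν.symm hz.le
  have hmain : IsHyperbolicG S ∨ IsBoundaryEllipticG S := by
    rcases eq_or_ne α β with rfl | hαβ
    · exact Or.inr (isBoundaryEllipticG_of_eigen_mk_one hx1 hy1 hxy hα hβ)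
    · exact Or.inl (isHyperbolicG_of_eigen_mk_one hS.2 hx1 hy1 hxy hα hβ hαβ)
  refine ⟨hmain, not_isParabolicG_of_mem_fixedBall ⟨hx, α, hα⟩ ⟨hy, β, hβ⟩ hxy, ?_⟩
  rintro ⟨hell, hnb⟩
  exact hmain.elim (fun hhypS => hhypS.1 hell) hnb

/-- an element of `G` commuting with a hyperbolic isometry is either
hyperbolic or boundary elliptic; in particular it is neither parabolic nor regular
elliptic. -/
theorem commutes_with_hyperbolic (T S : (H × ℂ) →L[ℂ] (H × ℂ))
    (hT : memG T) (hhyp : IsHyperbolicG T)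
    (hS : memG S) (hcomm : S ∘L T = T ∘L S) :
    (IsHyperbolicG S ∨ IsBoundaryEllipticG S) ∧
    ¬ IsParabolicG S ∧ ¬ IsRegularEllipticG S :=
  commutes_with_hyperbolic_general T S hhyp hS hcomm

end
end

section
/- Let U be a unitary operator of the orthogonal complement (ℂ·e)^⊥ in H, a' ∈ H orthogonal to e, λ, μ, s ∈ ℂ with λ·conj(μ) = 1, Re s = (1/2)‖a'‖² and s ≠ 0, and let T̂ be the operator on H ⊕ ℂ given by T̂(x,z) = ((λ·⟨x,e⟩ + ⟨x', U⁻¹(a')⟩ + μ·s·z)·e + U(x') + μ·z·a', μ·z), which belongs to Ĝ. Then the spectrum of T̂ equals {λ, μ} ∪ σ(U), where σ(U) is the spectrum of U as a bounded operator on (ℂ·e)^⊥. -/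
/-!
In the coordinates `(⟨x,e⟩, x', z)` of `H ⊕ ℂ`, `T̂` is block upper triangular with diagonal
blocks `λ`, `U`, `μ`. A block upper triangular map one of whose diagonal blocks is bijective is
bijective exactly when the other one is, so `t - T̂` is invertible iff `t ≠ λ`, `t ≠ μ` and `t - U`
is invertible. Invertibility of `T̂` itself is the case `t = 0`, and the invariance of `Â` is a
direct computation in the same coordinates, using that `U` is unitary, `U c' = a'`,
`λ·conj μ = 1` and `2 Re s = ‖a'‖²`.
-/

noncomputable section

variable {H : Type*} [NormedAddCommGroup H] [InnerProductSpace ℂ H] [CompleteSpace H]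

/-- The Hermitian form `Â((x,z),(y,w)) = -z·conj⟨y,e⟩ - ⟨x,e⟩·conj w + ⟨x',y'⟩`
(paper convention: linear in the first argument, with `⟨a,b⟩ = inner b a` in Mathlib,
and `x' = x - ⟨x,e⟩e`). -/
def hatA (e : H) (u v : H × ℂ) : ℂ :=
  - u.2 * (inner ℂ v.1 e : ℂ) - (inner ℂ e u.1 : ℂ) * (starRingEnd ℂ) v.2
    + (inner ℂ (v.1 - (inner ℂ e v.1 : ℂ) • e) (u.1 - (inner ℂ e u.1 : ℂ) • e) : ℂ)

/-- Membership in the group `Ĝ` of bounded bijective linear maps preserving `Â`. -/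
def memGhat (e : H) (T : (H × ℂ) →L[ℂ] (H × ℂ)) : Prop :=
  Function.Bijective T ∧ ∀ u v : H × ℂ, hatA e (T u) (T v) = hatA e u v

/-- `T` is the Heisenberg translation `(λ, a', s)`: an element of `Ĝ` sending
`(x,z)` to `λ·((⟨x,e⟩ + ⟨x',a'⟩ + s·z)·e + x' + z·a', z)`, where `|λ| = 1`,
`a' ⊥ e`, `s ≠ 0` and `Re s = ‖a'‖²/2`. -/
def IsHeisenberg (e : H) (T : (H × ℂ) →L[ℂ] (H × ℂ)) (lam : ℂ) (a' : H) (s : ℂ) :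
    Prop :=
  ‖lam‖ = 1 ∧ a' ∈ (ℂ ∙ e)ᗮ ∧ s ≠ 0 ∧ s.re = (1 / 2) * ‖a'‖ ^ 2 ∧
  memGhat e T ∧
  ∀ (x : H) (z : ℂ),
    T (x, z) = lam •
      (((((inner ℂ e x : ℂ) + (inner ℂ a' (x - (inner ℂ e x : ℂ) • e) : ℂ) + s * z) • e
          + (x - (inner ℂ e x : ℂ) • e) + z • a', z)) : H × ℂ)

/-- `K†`, the `Â`-orthogonal complement of a subspace `K` of `H ⊕ ℂ`. -/
def daggerHat (e : H) (K : Submodule ℂ (H × ℂ)) : Submodule ℂ (H × ℂ) where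
  carrier := {v | ∀ m ∈ K, hatA e v m = 0}
  add_mem' := by
    intro a b ha hb m hm
    have h1 := ha m hm
    have h2 := hb m hm
    simp only [hatA, Prod.fst_add, Prod.snd_add, inner_add_right, inner_sub_right,
      inner_smul_right, add_smul] at *
    ring_nf at *
    linear_combination h1 + h2
  zero_mem' := by
    intro m hm
    simp [hatA]
  smul_mem' := by
    intro c a ha m hm
    have h1 := ha m hm
    simp only [hatA, Prod.smul_fst, Prod.smul_snd, inner_smul_right, inner_sub_right,
      smul_eq_mul, smul_smul] at *
    ring_nf at *
    linear_combination c * h1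

end

section
variable {H : Type*} [NormedAddCommGroup H] [InnerProductSpace ℂ H] [CompleteSpace H]

/-- The component `x' = x - ⟨x,e⟩e` of `x`, as an element of `(ℂ·e)ᗮ`. -/
noncomputable def projPerp (e : H) (he : ‖e‖ = 1) (x : H) : ((ℂ ∙ e)ᗮ : Submodule ℂ H) :=
  ⟨x - (inner ℂ e x : ℂ) • e, by
    rw [Submodule.mem_orthogonal]
    intro u hu
    rcases Submodule.mem_span_singleton.1 hu with ⟨c, rfl⟩
    have h1 : (inner ℂ e e : ℂ) = 1 := by
      rw [inner_self_eq_norm_sq_to_K, he]; norm_num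
    simp [inner_smul_left, inner_sub_right, inner_smul_right, h1, he]
    ring⟩

end

open Function

section UpperTriangular

variable {α β γ δ : Type*} [AddGroup γ] {A : α → γ} {B : β → γ} {D : β → δ}

def upperTriangular (A : α → γ) (B : β → γ) (D : β → δ) (q : α × β) : γ × δ :=
  (A q.1 + B q.2, D q.2)

theorem injective_upperTriangular (hA : Injective A) (hD : Injective D) :
    Injective (upperTriangular A B D) := by
  rintro ⟨m, n⟩ ⟨m', n'⟩ h
  simp only [upperTriangular, Prod.mk.injEq] at h
  obtain rfl := hD h.2
  rw [hA (add_right_cancel h.1)]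

theorem surjective_upperTriangular (hA : Surjective A) (hD : Surjective D) :
    Surjective (upperTriangular A B D) := by
  rintro ⟨x, y⟩
  obtain ⟨n, rfl⟩ := hD y
  obtain ⟨m, hm⟩ := hA (x - B n)
  exact ⟨(m, n), by simp [upperTriangular, hm]⟩

theorem Function.Injective.of_upperTriangular_left [Nonempty β]
    (h : Injective (upperTriangular A B D)) : Injective A := by
  intro m m' hm
  obtain ⟨n⟩ := ‹Nonempty β›
  exact congrArg Prod.fst (@h (m, n) (m', n) (by simp [upperTriangular, hm]))

theorem Function.Surjective.of_upperTriangular_right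
    (h : Surjective (upperTriangular A B D)) : Surjective D := fun y =>
  let ⟨q, hq⟩ := h (0, y)
  ⟨q.2, congrArg Prod.snd hq⟩

theorem Function.Injective.of_upperTriangular_right (hA : Surjective A)
    (h : Injective (upperTriangular A B D)) : Injective D := by
  intro n n' hn
  obtain ⟨m, hm⟩ := hA (-B n)
  obtain ⟨m', hm'⟩ := hA (-B n')
  exact congrArg Prod.snd (@h (m, n) (m', n') (by simp [upperTriangular, hm, hm', hn]))

theorem Function.Surjective.of_upperTriangular_left [Nonempty β] (hD : Injective D)
    (h : Surjective (upperTriangular A B D)) : Surjective A := by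
  intro x
  obtain ⟨n⟩ := ‹Nonempty β›
  obtain ⟨⟨m, n'⟩, hq⟩ := h (x + B n, D n)
  simp only [upperTriangular, Prod.mk.injEq] at hq
  obtain rfl := hD hq.2
  exact ⟨m, add_right_cancel hq.1⟩

theorem bijective_upperTriangular_iff_of_bijective_left (hA : Bijective A) :
    Bijective (upperTriangular A B D) ↔ Bijective D :=
  ⟨fun h => ⟨h.1.of_upperTriangular_right hA.2, h.2.of_upperTriangular_right⟩,
    fun hD => ⟨injective_upperTriangular hA.1 hD.1, surjective_upperTriangular hA.2 hD.2⟩⟩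

theorem bijective_upperTriangular_iff_of_bijective_right [Nonempty β] (hD : Bijective D) :
    Bijective (upperTriangular A B D) ↔ Bijective A :=
  ⟨fun h => ⟨h.1.of_upperTriangular_left, h.2.of_upperTriangular_left hD.1⟩,
    fun hA => ⟨injective_upperTriangular hA.1 hD.1, surjective_upperTriangular hA.2 hD.2⟩⟩

theorem bijective_upperTriangular_mul_iff {𝕜 M N : Type*} [Field 𝕜] [Nonempty M] [AddGroup N]
    {a c : 𝕜} {B : M × 𝕜 → 𝕜} {A : M → N} {B' : 𝕜 → N} :
    Bijective (upperTriangular (a * ·) B (upperTriangular A B' (c * ·))) ↔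
      a ≠ 0 ∧ c ≠ 0 ∧ Bijective A := by
  by_cases ha : a = 0
  · subst ha
    refine iff_of_false (fun h => ?_) (by simp)
    exact one_ne_zero (h.1.of_upperTriangular_left (by simp : (0 : 𝕜) * 1 = 0 * 0))
  have ha' : Bijective (a * ·) := (Units.mk0 a ha).mulLeft_bijective
  rw [bijective_upperTriangular_iff_of_bijective_left ha']
  by_cases hc : c = 0
  · subst hc
    refine iff_of_false (fun h => ?_) (by simp)
    obtain ⟨z, hz⟩ := h.2.of_upperTriangular_right (1 : 𝕜)
    simp at hz
  have hc' : Bijective (c * ·) := (Units.mk0 c hc).mulLeft_bijective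
  rw [bijective_upperTriangular_iff_of_bijective_right hc']
  exact ⟨fun h => ⟨ha, hc, h⟩, fun h => h.2.2⟩

end UpperTriangular

noncomputable section Coordinates

variable {H : Type*} [NormedAddCommGroup H] [InnerProductSpace ℂ H]
  {e : H} (he : ‖e‖ = 1)

include he in
theorem inner_smul_add_of_mem_orthogonal (α : ℂ) (p : (ℂ ∙ e)ᗮ) :
    inner ℂ e (α • e + (p : H)) = α := by
  rw [inner_add_right, inner_smul_right, inner_self_eq_norm_sq_to_K, he,
    Submodule.mem_orthogonal_singleton_iff_inner_right.1 p.2]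
  simp

theorem projPerp_smul_add (α : ℂ) (p : (ℂ ∙ e)ᗮ) : projPerp e he (α • e + (p : H)) = p := by
  ext
  simp [projPerp, inner_smul_add_of_mem_orthogonal he]

theorem smul_add_projPerp (x : H) : inner ℂ e x • e + (projPerp e he x : H) = x :=
  add_sub_cancel _ _

def coordEquiv : (ℂ × ((ℂ ∙ e)ᗮ × ℂ)) ≃ₗ[ℂ] H × ℂ where
  toFun q := (q.1 • e + q.2.1, q.2.2)
  invFun u := (inner ℂ e u.1, projPerp e he u.1, u.2)
  map_add' q r := by
    simp only [Prod.fst_add, Prod.snd_add, Submodule.coe_add, add_smul, Prod.mk_add_mk]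
    rw [add_add_add_comm]
  map_smul' c q := by
    simp [smul_add, smul_smul]
  left_inv q := by
    simp [inner_smul_add_of_mem_orthogonal he, projPerp_smul_add he]
  right_inv u := by
    simp [smul_add_projPerp he]

@[simp]
theorem coordEquiv_apply (q : ℂ × ((ℂ ∙ e)ᗮ × ℂ)) :
    coordEquiv he q = (q.1 • e + (q.2.1 : H), q.2.2) := rfl

theorem hatA_coordEquiv (q r : ℂ × ((ℂ ∙ e)ᗮ × ℂ)) :
    hatA e (coordEquiv he q) (coordEquiv he r) =
      -q.2.2 * starRingEnd ℂ r.1 - q.1 * starRingEnd ℂ r.2.2 + inner ℂ (r.2.1 : H) q.2.1 := by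
  simp only [hatA, coordEquiv_apply, inner_smul_add_of_mem_orthogonal he, add_sub_cancel_left]
  rw [← inner_conj_symm, inner_smul_add_of_mem_orthogonal he]

variable (U : (ℂ ∙ e)ᗮ →L[ℂ] (ℂ ∙ e)ᗮ) (a' c' : (ℂ ∙ e)ᗮ) (lam μ s : ℂ)

def stabilizerCoord (q : ℂ × ((ℂ ∙ e)ᗮ × ℂ)) : ℂ × ((ℂ ∙ e)ᗮ × ℂ) :=
  (lam * q.1 + inner ℂ c' q.2.1 + μ * s * q.2.2, U q.2.1 + (μ * q.2.2) • a', μ * q.2.2)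

variable {U a' c' lam μ s} {T : (H × ℂ) →L[ℂ] (H × ℂ)}

theorem apply_coordEquiv_eq_coordEquiv_stabilizerCoord
    (hT : ∀ (x : H) (z : ℂ),
      T (x, z) =
        (((lam * (inner ℂ e x : ℂ)
            + (inner ℂ (c' : H) (x - (inner ℂ e x : ℂ) • e) : ℂ)
            + μ * s * z) • e
          + ((U (projPerp e he x) : H))
          + (μ * z) • (a' : H), μ * z) : H × ℂ))
    (q : ℂ × ((ℂ ∙ e)ᗮ × ℂ)) :
    T (coordEquiv he q) = coordEquiv he (stabilizerCoord U a' c' lam μ s q) := by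
  simp only [coordEquiv_apply, hT, inner_smul_add_of_mem_orthogonal he, projPerp_smul_add he,
    add_sub_cancel_left, stabilizerCoord, Submodule.coe_add, Submodule.coe_smul,
    Submodule.coe_inner, add_assoc]

theorem spectrum_eq_of_apply_coordEquiv [CompleteSpace H]
    (hT : ∀ q, T (coordEquiv he q) = coordEquiv he (stabilizerCoord U a' c' lam μ s q)) :
    spectrum ℂ T = {lam, μ} ∪ spectrum ℂ U := by
  ext t
  have hconj : ⇑(algebraMap ℂ ((H × ℂ) →L[ℂ] (H × ℂ)) t - T) ∘ coordEquiv he =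
      coordEquiv he ∘ upperTriangular ((t - lam) * ·) (fun r => -(inner ℂ c' r.1 + μ * s * r.2))
        (upperTriangular ⇑(algebraMap ℂ ((ℂ ∙ e)ᗮ →L[ℂ] (ℂ ∙ e)ᗮ) t - U)
          (fun z => -((μ * z) • a')) ((t - μ) * ·)) := by
    funext ⟨α, p, z⟩
    simp only [comp_apply, sub_apply, ContinuousLinearMap.algebraMap_apply, hT,
      ← map_smul, ← map_sub]
    congr 1
    simp only [stabilizerCoord, upperTriangular, Prod.smul_mk, Prod.mk_sub_mk, smul_eq_mul,
      sub_apply, ContinuousLinearMap.algebraMap_apply]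
    refine Prod.ext (by ring) (Prod.ext ?_ (by ring))
    module
  rw [spectrum.mem_iff, ContinuousLinearMap.isUnit_iff_bijective,
    ← EquivLike.bijective_comp (coordEquiv he), hconj, EquivLike.comp_bijective,
    bijective_upperTriangular_mul_iff, sub_ne_zero, sub_ne_zero]
  simp only [Set.mem_union, Set.mem_insert_iff, Set.mem_singleton_iff, spectrum.mem_iff,
    ContinuousLinearMap.isUnit_iff_bijective]
  tauto

theorem hatA_apply_coordEquiv
    (hUinner : ∀ u v : (ℂ ∙ e)ᗮ, inner ℂ (U u) (U v) = inner ℂ u v) (hc' : U c' = a')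
    (hlamμ : lam * starRingEnd ℂ μ = 1) (hs : s.re = (1 / 2) * ‖(a' : H)‖ ^ 2)
    (hT : ∀ q, T (coordEquiv he q) = coordEquiv he (stabilizerCoord U a' c' lam μ s q))
    (q r : ℂ × ((ℂ ∙ e)ᗮ × ℂ)) :
    hatA e (T (coordEquiv he q)) (T (coordEquiv he r)) =
      hatA e (coordEquiv he q) (coordEquiv he r) := by
  obtain ⟨α, p, z⟩ := q
  obtain ⟨β, q, w⟩ := r
  have hμlam : starRingEnd ℂ lam * μ = 1 := by
    simpa [mul_comm] using congrArg (starRingEnd ℂ) hlamμ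
  have hs' : s + starRingEnd ℂ s = ‖a'‖ ^ 2 := by
    rw [Complex.add_conj, hs, Submodule.coe_norm]
    push_cast
    ring
  have hUa : ∀ u, inner ℂ a' (U u) = inner ℂ c' u := fun u => hc' ▸ hUinner c' u
  have haU : ∀ u, inner ℂ (U u) a' = inner ℂ u c' := fun u => hc' ▸ hUinner u c'
  simp only [hT, hatA_coordEquiv, stabilizerCoord, ← Submodule.coe_inner]
  simp only [inner_add_left, inner_add_right, inner_smul_left, inner_smul_right, hUinner, hUa,
    haU, inner_self_eq_norm_sq_to_K, map_add, map_mul, inner_conj_symm]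
  linear_combination (-(z * starRingEnd ℂ β)) * hμlam - (α * starRingEnd ℂ w) * hlamμ
    - (μ * starRingEnd ℂ μ * z * starRingEnd ℂ w) * hs'

end Coordinates

section

variable {H : Type*} [NormedAddCommGroup H] [InnerProductSpace ℂ H] [CompleteSpace H]

theorem stabilizer_infinity_spectrum_general
    (e : H) (he : ‖e‖ = 1)
    (U : ((ℂ ∙ e)ᗮ : Submodule ℂ H) →L[ℂ] ((ℂ ∙ e)ᗮ : Submodule ℂ H))
    (hUbij : Function.Bijective U)
    (hUinner : ∀ u v : ((ℂ ∙ e)ᗮ : Submodule ℂ H), (inner ℂ (U u) (U v) : ℂ) = inner ℂ u v)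
    (a' c' : ((ℂ ∙ e)ᗮ : Submodule ℂ H)) (hc' : U c' = a')
    (lam μ s : ℂ) (hlamμ : lam * (starRingEnd ℂ) μ = 1)
    (hs : s.re = (1 / 2) * ‖(a' : H)‖ ^ 2)
    (T : (H × ℂ) →L[ℂ] (H × ℂ))
    (hTform : ∀ (x : H) (z : ℂ),
      T (x, z) =
        (((lam * (inner ℂ e x : ℂ)
            + (inner ℂ (c' : H) (x - (inner ℂ e x : ℂ) • e) : ℂ)
            + μ * s * z) • e
          + ((U (projPerp e he x) : H))
          + (μ * z) • (a' : H), μ * z) : H × ℂ)) :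
    memGhat e T ∧ spectrum ℂ T = {lam, μ} ∪ spectrum ℂ U := by
  have hT := apply_coordEquiv_eq_coordEquiv_stabilizerCoord he hTform
  have hspec := spectrum_eq_of_apply_coordEquiv he hT
  have hlam : lam ≠ 0 := left_ne_zero_of_mul_eq_one hlamμ
  have hμ : μ ≠ 0 := by
    rintro rfl
    simp at hlamμ
  have hT0 : (0 : ℂ) ∉ spectrum ℂ T := by
    simp [hspec, hlam.symm, hμ.symm, spectrum.zero_mem_iff,
      ContinuousLinearMap.isUnit_iff_bijective, hUbij]
  refine ⟨⟨?_, fun u v => ?_⟩, hspec⟩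
  · simpa [spectrum.zero_mem_iff, ContinuousLinearMap.isUnit_iff_bijective] using hT0
  · obtain ⟨q, rfl⟩ := (coordEquiv he).surjective u
    obtain ⟨r, rfl⟩ := (coordEquiv he).surjective v
    exact hatA_apply_coordEquiv he hUinner hc' hlamμ hs hT q r

/-- the spectrum of an element of the stabilizer of `∞` in `Ĝ` of the
standard form (with `λ·conj μ = 1`, `Re s = ‖a'‖²/2`, `s ≠ 0`) is `{λ, μ} ∪ σ(U)`. -/
theorem stabilizer_infinity_spectrum
    (e : H) (he : ‖e‖ = 1)
    (U : ((ℂ ∙ e)ᗮ : Submodule ℂ H) →L[ℂ] ((ℂ ∙ e)ᗮ : Submodule ℂ H))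
    (hUbij : Function.Bijective U)
    (hUinner : ∀ u v : ((ℂ ∙ e)ᗮ : Submodule ℂ H), (inner ℂ (U u) (U v) : ℂ) = inner ℂ u v)
    (a' c' : ((ℂ ∙ e)ᗮ : Submodule ℂ H)) (hc' : U c' = a')
    (lam μ s : ℂ) (hlamμ : lam * (starRingEnd ℂ) μ = 1)
    (hs : s.re = (1 / 2) * ‖(a' : H)‖ ^ 2) (hs0 : s ≠ 0)
    (T : (H × ℂ) →L[ℂ] (H × ℂ))
    (hTform : ∀ (x : H) (z : ℂ),
      T (x, z) =
        (((lam * (inner ℂ e x : ℂ)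
            + (inner ℂ (c' : H) (x - (inner ℂ e x : ℂ) • e) : ℂ)
            + μ * s * z) • e
          + ((U (projPerp e he x) : H))
          + (μ * z) • (a' : H), μ * z) : H × ℂ)) :
    memGhat e T ∧ spectrum ℂ T = {lam, μ} ∪ spectrum ℂ U :=
  stabilizer_infinity_spectrum_general e he U hUbij hUinner a' c' hc' lam μ s hlamμ hs T hTform
end
end
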